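/- For all real numbers a and b and every exponent m with 0 < m < 1, we have |a^m - b^m| ≤ 2^(1-m) |a - b|^m, where a^m denotes the signed power |a|^(m-1) a (with 0^m = 0). -/
import Mathlib


/-- Signed power: `a^m := |a|^(m-1) a` for `a ≠ 0`, and `0^m := 0`. -/
noncomputable def signedPow (a m : ℝ) : ℝ := if a = 0 then 0 else |a| ^ (m - 1) * a

open Real in
lemma signedPow_of_nonneg {a : ℝ} (m : ℝ) (hm : 0 < m) (ha : 0 ≤ a) :
    signedPow a m = a ^ m := by
  unfold signedPow
  rcases eq_or_lt_of_le ha with h | h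
  · simp [← h, Real.zero_rpow hm.ne']
  · rw [if_neg h.ne', abs_of_pos h]
    nth_rewrite 2 [show a = a ^ (1:ℝ) by rw [Real.rpow_one]]
    rw [← Real.rpow_add h]
    ring_nf

lemma signedPow_neg (a m : ℝ) : signedPow (-a) m = - signedPow a m := by
  unfold signedPow
  rcases eq_or_ne a 0 with rfl | h
  · simp
  · rw [if_neg (by simpa using h), if_neg h, abs_neg]
    ring

open Real NNReal in
lemma subadd_rpow {m : ℝ} (hm0 : 0 ≤ m) (hm1 : m ≤ 1) {x y : ℝ} (hx : 0 ≤ x) (hy : 0 ≤ y) :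
    (x + y) ^ m ≤ x ^ m + y ^ m := by
  lift x to ℝ≥0 using hx
  lift y to ℝ≥0 using hy
  have := NNReal.rpow_add_le_add_rpow x y hm0 hm1
  exact_mod_cast this

open Real NNReal in
lemma rpow_add_rpow_le' {m : ℝ} (hm0 : 0 < m) (hm1 : m ≤ 1) {x y : ℝ} (hx : 0 ≤ x) (hy : 0 ≤ y) :
    x ^ m + y ^ m ≤ 2 ^ (1 - m) * (x + y) ^ m := by
  lift x to ℝ≥0 using hx
  lift y to ℝ≥0 using hy
  have key : x ^ m + y ^ m ≤ (2 : ℝ≥0) ^ (1 - m) * (x + y) ^ m := by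
    have hp : (1:ℝ) ≤ 1 / m := by rw [le_div_iff₀ hm0]; linarith
    have h := NNReal.rpow_add_le_mul_rpow_add_rpow (x ^ m) (y ^ m) hp
    have hxm : (x ^ m) ^ (1/m : ℝ) = x := by
      rw [← NNReal.rpow_mul, mul_one_div, div_self hm0.ne', NNReal.rpow_one]
    have hym : (y ^ m) ^ (1/m : ℝ) = y := by
      rw [← NNReal.rpow_mul, mul_one_div, div_self hm0.ne', NNReal.rpow_one]
    rw [hxm, hym] at h
    have h2 := NNReal.rpow_le_rpow h hm0.le
    rwa [← NNReal.rpow_mul, one_div_mul_cancel hm0.ne', NNReal.rpow_one,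
      NNReal.mul_rpow, ← NNReal.rpow_mul, sub_mul, one_div_mul_cancel hm0.ne',
      one_mul] at h2
  calc ((x:ℝ)) ^ m + (y:ℝ) ^ m = ((x ^ m + y ^ m : ℝ≥0) : ℝ) := by push_cast [NNReal.coe_rpow]; ring
    _ ≤ (((2 : ℝ≥0) ^ (1 - m) * (x + y) ^ m : ℝ≥0) : ℝ) := by exact_mod_cast key
    _ = 2 ^ (1 - m) * ((x:ℝ) + y) ^ m := by push_cast [NNReal.coe_rpow]; ring

theorem abs_signedPow_sub_signedPow_le (m : ℝ) (hm0 : 0 < m) (hm1 : m < 1) :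
    ∀ a b : ℝ, |signedPow a m - signedPow b m| ≤ 2 ^ (1 - m) * |a - b| ^ m := by
  have h2 : (1:ℝ) ≤ 2 ^ (1 - m) :=
    Real.one_le_rpow (by norm_num) (by linarith)
  -- case: both nonneg, b ≤ a
  have key : ∀ a b : ℝ, 0 ≤ b → b ≤ a →
      |signedPow a m - signedPow b m| ≤ 2 ^ (1 - m) * |a - b| ^ m := by
    intro a b hb hba
    have ha : 0 ≤ a := hb.trans hba
    rw [signedPow_of_nonneg m hm0 ha, signedPow_of_nonneg m hm0 hb,
      abs_of_nonneg (by linarith : (0:ℝ) ≤ a - b)]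
    have hd : b ^ m ≤ a ^ m := Real.rpow_le_rpow hb hba hm0.le
    rw [abs_of_nonneg (by linarith)]
    have hsub : a ^ m ≤ (a - b) ^ m + b ^ m := by
      have := subadd_rpow hm0.le hm1.le (by linarith : (0:ℝ) ≤ a - b) hb
      simpa using this
    have h1 : a ^ m - b ^ m ≤ (a - b) ^ m := by linarith
    have hnn : (0:ℝ) ≤ (a - b) ^ m := Real.rpow_nonneg (by linarith) m
    nlinarith
  -- case: mixed signs b ≤ 0 ≤ a
  have keym : ∀ a b : ℝ, b ≤ 0 → 0 ≤ a →
      |signedPow a m - signedPow b m| ≤ 2 ^ (1 - m) * |a - b| ^ m := by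
    intro a b hb ha
    have hsb : signedPow b m = - (-b) ^ m := by
      rw [show b = -(-b) by ring, signedPow_neg, signedPow_of_nonneg m hm0 (by linarith)]
      ring_nf
    rw [hsb, signedPow_of_nonneg m hm0 ha, sub_neg_eq_add,
      abs_of_nonneg (add_nonneg (Real.rpow_nonneg ha m) (Real.rpow_nonneg (by linarith) m)),
      abs_of_nonneg (by linarith : (0:ℝ) ≤ a - b)]
    have := rpow_add_rpow_le' hm0 hm1.le ha (by linarith : (0:ℝ) ≤ -b)
    simpa [sub_eq_add_neg] using this
  intro a b
  rcases le_total b a with hba | hab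
  · rcases le_total 0 b with hb | hb
    · exact key a b hb hba
    · rcases le_total 0 a with ha | ha
      · exact keym a b hb ha
      · have := key (-b) (-a) (by linarith) (by linarith)
        rw [signedPow_neg, signedPow_neg, neg_sub_neg, neg_sub_neg] at this
        exact this
  · rcases le_total 0 a with ha | ha
    · have := key b a ha hab
      rwa [abs_sub_comm, abs_sub_comm b a] at this
    · rcases le_total 0 b with hb | hb
      · have := keym b a ha hb
        rwa [abs_sub_comm, abs_sub_comm b a] at this
      · have := key (-a) (-b) (by linarith) (by linarith)
        rw [signedPow_neg, signedPow_neg, neg_sub_neg, neg_sub_neg] at this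
        rwa [abs_sub_comm, abs_sub_comm b a] at this
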